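/- arXiv:1709.04528 — 5 statements merged into one kernel-verified Lean document; each statement's English description precedes it below -/
import Mathlib

section
/- Izzo's contraction mapping principle: Let (X, d) be a metric space and (Qₐ)ₐ∈ℕ a sequence of maps on X for which there exists c < 1 with d(Qₐ(x), Qₐ(y)) ≤ c·d(x, y) for all x, y ∈ X and a ∈ ℕ. Suppose there exists x∞ ∈ X with lim_{a→∞} Qₐ(x∞) = x∞. Let x₀ ∈ X be arbitrary and define xₐ recursively by x_{a+1} = Qₐ(xₐ). Then lim_{a→∞} xₐ = x∞. -/
open Filter Topology

/-! The distances `uₐ = d(xₐ, x∞)` satisfy `u_{a+1} ≤ c uₐ + d(Qₐ x∞, x∞)` by the triangle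
inequality through `Qₐ x∞`, and a perturbed geometric recursion whose perturbation tends to `0`
forces its solution to `0`: once the perturbation is below `(1 - c) δ`, the excess `uₐ - δ`
decays geometrically. -/

theorem tendsto_zero_of_le_mul_add {u e : ℕ → ℝ} {c : ℝ} (hu : ∀ n, 0 ≤ u n) (hc₀ : 0 ≤ c)
    (hc₁ : c < 1) (he : Tendsto e atTop (𝓝 0)) (hrec : ∀ n, u (n + 1) ≤ c * u n + e n) :
    Tendsto u atTop (𝓝 0) := by
  refine tendsto_order.2 ⟨fun a ha => .of_forall fun n => ha.trans_le (hu n), fun ε hε => ?_⟩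
  set δ := ε / 2 with hδε
  have hδ : 0 < (1 - c) * δ := mul_pos (sub_pos.2 hc₁) (half_pos hε)
  obtain ⟨N, hN⟩ := eventually_atTop.1 (he.eventually (ge_mem_nhds hδ))
  have hgeom (k : ℕ) : u (k + N) - δ ≤ c ^ k * (u N - δ) := by
    refine (le_geom (u := fun k => u (k + N) - δ) hc₀ k fun j _ => ?_).trans_eq
      (by rw [zero_add])
    have hstep := hrec (j + N)
    have hsmall := hN (j + N) (Nat.le_add_left N j)
    rw [add_right_comm] at hstep
    linear_combination hstep + hsmall
  have hpow : Tendsto (fun k => c ^ k * (u N - δ)) atTop (𝓝 0) := by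
    simpa using (tendsto_pow_atTop_nhds_zero_of_lt_one hc₀ hc₁).mul_const (u N - δ)
  rw [← map_add_atTop_eq_nat N, eventually_map]
  filter_upwards [hpow.eventually (gt_mem_nhds (half_pos hε))] with k hk
  linarith [hgeom k, hδε]

/-- Izzo's contraction mapping principle.  Let `(X, d)` be a metric
space and `(Qₐ)` a sequence of maps on `X`, all contractions with a common
constant `c < 1`.  If `Qₐ(x∞) → x∞` for some point `x∞`, then for any `x₀` the
recursively defined sequence `x_{a+1} = Qₐ(xₐ)` converges to `x∞`. -/
theorem izzo_contraction
    (X : Type*) [MetricSpace X]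
    (Q : ℕ → X → X) (c : ℝ) (hc : c < 1)
    (hQ : ∀ (a : ℕ) (x y : X), dist (Q a x) (Q a y) ≤ c * dist x y)
    (xinf : X) (hfix : Tendsto (fun a => Q a xinf) atTop (𝓝 xinf))
    (x : ℕ → X) (hrec : ∀ a : ℕ, x (a + 1) = Q a (x a)) :
    Tendsto x atTop (𝓝 xinf) := by
  rw [tendsto_iff_dist_tendsto_zero] at hfix ⊢
  refine tendsto_zero_of_le_mul_add (fun a => dist_nonneg) (le_max_right c 0)
    (max_lt hc one_pos) hfix fun a => ?_
  calc dist (x (a + 1)) xinf = dist (Q a (x a)) xinf := by rw [hrec]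
    _ ≤ dist (Q a (x a)) (Q a xinf) + dist (Q a xinf) xinf := dist_triangle _ _ _
    _ ≤ max c 0 * dist (x a) xinf + dist (Q a xinf) xinf := by
      gcongr
      exact (hQ a _ _).trans (by gcongr; exact le_max_left c 0)
end

section
/- Uniqueness for the canonical-coordinates ODE: let C ∈ C(B^n(η); 𝕄^{n×n}) with C(0) = 0 and ‖C(x)‖ ≤ D|x| for all x ∈ B^n(η), where η ≤ (10D)⁻¹. If A₁, A₂ ∈ C(B^n(η); 𝕄^{n×n}) both satisfy (d/dr)(r A(rθ)) = −A(rθ)² − C(rθ)A(rθ) − C(rθ) for all θ ∈ S^{n−1} and r ∈ (0, η), with A₁(0) = A₂(0) = 0, then A₁ = A₂. -/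
/-!
Along a ray `x = rθ` the equation reads `(r a(r))' = -a² - c a - c` with `‖c(r)‖ ≤ D r`.
A continuous solution with `a(0) = 0` is `O(r)`: near `0` it is at most `1/2` in norm, and the
mean value inequality for `r a(r)` at a point where `‖a‖` attains its maximum `M` on `[0, r]`
gives `M ≤ (M + D r) M + D r`, which forces `M ≤ 3 D r` because `M ≤ 1/2` and `D r ≤ 1/10`.
For two such solutions `f(r) = r (a₁(r) - a₂(r))` satisfies
`‖f'‖ ≤ (‖a₁‖ + ‖a₂‖ + ‖c‖) ‖a₁ - a₂‖ ≤ K ‖f‖`, so `f = 0` by Grönwall's inequality.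
-/

open Metric Set Filter Topology

def riccatiRHS {E : Type*} [Ring E] (a c : E) : E := -(a * a) - c * a - c

theorem riccatiRHS_sub {E : Type*} [Ring E] (a₁ a₂ c : E) :
    riccatiRHS a₁ c - riccatiRHS a₂ c = -(a₁ * (a₁ - a₂)) - (a₁ - a₂) * a₂ - c * (a₁ - a₂) := by
  unfold riccatiRHS
  noncomm_ring

section Riccati

variable {E : Type*} [SeminormedRing E]

theorem norm_riccatiRHS_sub_le (a₁ a₂ c : E) :
    ‖riccatiRHS a₁ c - riccatiRHS a₂ c‖ ≤ (‖a₁‖ + ‖a₂‖ + ‖c‖) * ‖a₁ - a₂‖ := by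
  rw [riccatiRHS_sub]
  calc _ ≤ ‖a₁ * (a₁ - a₂)‖ + ‖(a₁ - a₂) * a₂‖ + ‖c * (a₁ - a₂)‖ := by
        refine (norm_sub_le _ _).trans (add_le_add_left ((norm_sub_le _ _).trans_eq ?_) _)
        rw [norm_neg]
    _ ≤ ‖a₁‖ * ‖a₁ - a₂‖ + ‖a₁ - a₂‖ * ‖a₂‖ + ‖c‖ * ‖a₁ - a₂‖ := by
        gcongr <;> exact norm_mul_le _ _
    _ = _ := by ring

theorem norm_riccatiRHS_le (a c : E) : ‖riccatiRHS a c‖ ≤ (‖a‖ + ‖c‖) * ‖a‖ + ‖c‖ := by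
  have h := norm_riccatiRHS_sub_le a 0 c
  have h0 : ‖riccatiRHS 0 c‖ = ‖c‖ := by simp [riccatiRHS]
  rw [norm_zero, add_zero, sub_zero] at h
  linarith [norm_sub_norm_le (riccatiRHS a c) (riccatiRHS 0 c)]

end Riccati

theorem hasDerivWithinAt_smul_self_zero {F : Type*} [NormedAddCommGroup F] [NormedSpace ℝ F]
    {φ : ℝ → F} {s : Set ℝ} (h : ContinuousWithinAt φ s 0) :
    HasDerivWithinAt (fun r => r • φ r) (φ 0) s 0 := by
  rw [hasDerivWithinAt_iff_tendsto_slope]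
  refine (h.mono sdiff_subset).tendsto.congr' ?_
  filter_upwards [self_mem_nhdsWithin] with r hr
  rw [slope_def_module, zero_smul, sub_zero, sub_zero, smul_smul, inv_mul_cancel₀ hr.2, one_smul]

theorem exists_norm_le_mul_of_norm_le_mul_on_Icc {F : Type*} [NormedAddCommGroup F]
    {f : ℝ → F} {b r₀ L : ℝ} (hf : ContinuousOn f (Icc 0 b)) (hr₀ : 0 < r₀)
    (hL : ∀ r ∈ Icc 0 r₀, ‖f r‖ ≤ L * r) : ∃ K, ∀ r ∈ Icc 0 b, ‖f r‖ ≤ K * r := by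
  obtain ⟨Q, hQ⟩ := isCompact_Icc.exists_bound_of_continuousOn hf
  refine ⟨max L (Q / r₀), fun r hr => ?_⟩
  rcases le_or_gt r r₀ with hrr₀ | hrr₀
  · exact (hL r ⟨hr.1, hrr₀⟩).trans (mul_le_mul_of_nonneg_right (le_max_left _ _) hr.1)
  · have hQ0 : 0 ≤ Q / r₀ := div_nonneg ((norm_nonneg _).trans (hQ r hr)) hr₀.le
    calc ‖f r‖ ≤ Q / r₀ * r₀ := (hQ r hr).trans_eq (div_mul_cancel₀ _ hr₀.ne').symm
      _ ≤ Q / r₀ * r := mul_le_mul_of_nonneg_left hrr₀.le hQ0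
      _ ≤ max L (Q / r₀) * r := mul_le_mul_of_nonneg_right (le_max_right _ _) hr.1

theorem mapsTo_smul_Icc_ball {V : Type*} [NormedAddCommGroup V] [NormedSpace ℝ V] {θ : V}
    {b η : ℝ} (hθ : ‖θ‖ = 1) (hbη : b < η) :
    MapsTo (fun r : ℝ => r • θ) (Icc 0 b) (ball 0 η) := fun r hr => by
  rw [mem_ball_zero_iff, norm_smul_of_nonneg hr.1, hθ, mul_one]
  exact hr.2.trans_lt hbη

section Ray

variable {E : Type*} [NormedRing E] [NormedSpace ℝ E]

structure IsRiccatiRaySolution (a c : ℝ → E) (b : ℝ) : Prop where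
  continuousOn : ContinuousOn a (Icc 0 b)
  apply_zero : a 0 = 0
  hasDerivWithinAt : ∀ r ∈ Ico 0 b,
    HasDerivWithinAt (fun ρ => ρ • a ρ) (riccatiRHS (a r) (c r)) (Ici r) r

namespace IsRiccatiRaySolution

variable {a c : ℝ → E} {b D : ℝ}

theorem of_ray {V : Type*} [NormedAddCommGroup V] [NormedSpace ℝ V] {A C : V → E} {θ : V}
    {η : ℝ} (hθ : ‖θ‖ = 1) (hb : 0 < b) (hbη : b < η) (hA : ContinuousOn A (ball 0 η))
    (hA0 : A 0 = 0) (hC0 : C 0 = 0)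
    (hode : ∀ r ∈ Ioo 0 η,
      HasDerivAt (fun ρ : ℝ => ρ • A (ρ • θ)) (riccatiRHS (A (r • θ)) (C (r • θ))) r) :
    IsRiccatiRaySolution (fun r => A (r • θ)) (fun r => C (r • θ)) b := by
  have hcont : ContinuousOn (fun r : ℝ => A (r • θ)) (Icc 0 b) :=
    hA.comp (continuous_id.smul continuous_const).continuousOn (mapsTo_smul_Icc_ball hθ hbη)
  refine ⟨hcont, by simpa using hA0, ?_⟩
  rintro r ⟨hr0, hrb⟩
  rcases hr0.eq_or_lt with rfl | hr0
  · -- at `r = 0` the equation degenerates to `(r a(r))'(0) = a(0) = 0`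
    have hrhs : riccatiRHS (A ((0 : ℝ) • θ)) (C ((0 : ℝ) • θ)) = A ((0 : ℝ) • θ) := by
      simp [riccatiRHS, hA0, hC0]
    rw [hrhs]
    exact (hasDerivWithinAt_smul_self_zero (hcont 0 ⟨le_rfl, hb.le⟩)).mono_of_mem_nhdsWithin
      (Icc_mem_nhdsGE hb)
  · exact (hode r ⟨hr0, hrb.trans hbη⟩).hasDerivWithinAt

theorem mono (h : IsRiccatiRaySolution a c b) {b' : ℝ} (hb' : b' ≤ b) :
    IsRiccatiRaySolution a c b' where
  continuousOn := h.continuousOn.mono (Icc_subset_Icc_right hb')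
  apply_zero := h.apply_zero
  hasDerivWithinAt r hr := h.hasDerivWithinAt r ⟨hr.1, hr.2.trans_le hb'⟩

theorem norm_le_of_norm_le (h : IsRiccatiRaySolution a c b) (hD : 0 ≤ D)
    (hc : ∀ r ∈ Icc 0 b, ‖c r‖ ≤ D * r) {M : ℝ} (hM : ∀ r ∈ Icc 0 b, ‖a r‖ ≤ M) :
    ∀ r ∈ Icc 0 b, ‖a r‖ ≤ (M + D * b) * M + D * b := by
  intro r hr
  have hb : 0 ≤ b := hr.1.trans hr.2
  have hM0 : 0 ≤ M := (norm_nonneg _).trans (hM 0 ⟨le_rfl, hb⟩)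
  have hDb : 0 ≤ D * b := mul_nonneg hD hb
  have hrhs : ∀ s ∈ Ico 0 b, ‖riccatiRHS (a s) (c s)‖ ≤ (M + D * b) * M + D * b := by
    intro s hs
    have has := hM s (Ico_subset_Icc_self hs)
    have hcs : ‖c s‖ ≤ D * b :=
      (hc s (Ico_subset_Icc_self hs)).trans (mul_le_mul_of_nonneg_left hs.2.le hD)
    calc _ ≤ (‖a s‖ + ‖c s‖) * ‖a s‖ + ‖c s‖ := norm_riccatiRHS_le _ _
      _ ≤ (M + D * b) * M + D * b := by gcongr
  rcases hr.1.eq_or_lt with rfl | hr0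
  · rw [h.apply_zero, norm_zero]
    positivity
  have hcont : ContinuousOn (fun ρ => ρ • a ρ) (Icc 0 b) := continuousOn_id.smul h.continuousOn
  have hmvt := norm_image_sub_le_of_norm_deriv_right_le_segment hcont h.hasDerivWithinAt hrhs r hr
  rw [zero_smul, sub_zero, sub_zero, norm_smul_of_nonneg hr0.le, mul_comm] at hmvt
  exact le_of_mul_le_mul_right hmvt hr0

theorem norm_le_of_norm_le_half (h : IsRiccatiRaySolution a c b) (hD : 0 ≤ D)
    (hDb : D * b ≤ 1 / 10) (hc : ∀ r ∈ Icc 0 b, ‖c r‖ ≤ D * r)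
    (hsmall : ∀ r ∈ Icc 0 b, ‖a r‖ ≤ 1 / 2) : ∀ r ∈ Icc 0 b, ‖a r‖ ≤ 3 * D * r := by
  intro r hr
  obtain ⟨s, hs, hmax⟩ := isCompact_Icc.exists_isMaxOn ⟨r, right_mem_Icc.2 hr.1⟩
    ((h.continuousOn.mono (Icc_subset_Icc_right hr.2)).norm)
  have hM : ∀ t ∈ Icc 0 r, ‖a t‖ ≤ ‖a s‖ := fun t ht => hmax ht
  have hself := (h.mono hr.2).norm_le_of_norm_le hD (fun t ht => hc t ⟨ht.1, ht.2.trans hr.2⟩)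
    hM s hs
  have hM2 : ‖a s‖ ≤ 1 / 2 := hsmall s ⟨hs.1, hs.2.trans hr.2⟩
  have hDr : D * r ≤ 1 / 10 := (mul_le_mul_of_nonneg_left hr.2 hD).trans hDb
  have hDr0 : 0 ≤ D * r := mul_nonneg hD hr.1
  nlinarith [hM r (right_mem_Icc.2 hr.1), norm_nonneg (a s)]

theorem exists_norm_le_mul (h : IsRiccatiRaySolution a c b) (hD : 0 ≤ D)
    (hDb : D * b ≤ 1 / 10) (hc : ∀ r ∈ Icc 0 b, ‖c r‖ ≤ D * r) (hb : 0 < b) :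
    ∃ K, ∀ r ∈ Icc 0 b, ‖a r‖ ≤ K * r := by
  have hnear : ∀ᶠ r in 𝓝[≥] 0, ‖a r‖ ≤ 1 / 2 := by
    have hlim := ((h.continuousOn 0 ⟨le_rfl, hb.le⟩).mono_of_mem_nhdsWithin
      (Icc_mem_nhdsGE hb)).norm
    rw [ContinuousWithinAt, h.apply_zero, norm_zero] at hlim
    exact hlim.eventually_le_const (by norm_num)
  obtain ⟨u, hu, hsmall⟩ := mem_nhdsGE_iff_exists_Icc_subset.1 hnear
  set r₀ := min u b
  have hr₀b : r₀ ≤ b := min_le_right _ _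
  refine exists_norm_le_mul_of_norm_le_mul_on_Icc (L := 3 * D) h.continuousOn (lt_min hu hb) ?_
  exact (h.mono hr₀b).norm_le_of_norm_le_half hD
    ((mul_le_mul_of_nonneg_left hr₀b hD).trans hDb) (fun r hr => hc r ⟨hr.1, hr.2.trans hr₀b⟩)
    (fun r hr => hsmall ⟨hr.1, hr.2.trans (min_le_left _ _)⟩)

theorem apply_eq_of_norm_le_mul {a₁ a₂ : ℝ → E} {K₁ K₂ : ℝ} (h₁ : IsRiccatiRaySolution a₁ c b)
    (h₂ : IsRiccatiRaySolution a₂ c b) (hc : ∀ r ∈ Icc 0 b, ‖c r‖ ≤ D * r)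
    (hK₁ : ∀ r ∈ Icc 0 b, ‖a₁ r‖ ≤ K₁ * r) (hK₂ : ∀ r ∈ Icc 0 b, ‖a₂ r‖ ≤ K₂ * r)
    (hb : 0 < b) : a₁ b = a₂ b := by
  set f : ℝ → E := fun r => r • a₁ r - r • a₂ r
  have hf_eq (r : ℝ) : f r = r • (a₁ r - a₂ r) := (smul_sub r (a₁ r) (a₂ r)).symm
  have hf : ContinuousOn f (Icc 0 b) :=
    (continuousOn_id.smul h₁.continuousOn).sub (continuousOn_id.smul h₂.continuousOn)
  have hf' : ∀ r ∈ Ico 0 b, HasDerivWithinAt f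
      (riccatiRHS (a₁ r) (c r) - riccatiRHS (a₂ r) (c r)) (Ici r) r := fun r hr =>
    (h₁.hasDerivWithinAt r hr).sub (h₂.hasDerivWithinAt r hr)
  have hbound : ∀ r ∈ Ico 0 b,
      ‖riccatiRHS (a₁ r) (c r) - riccatiRHS (a₂ r) (c r)‖ ≤ (K₁ + K₂ + D) * ‖f r‖ + 0 := by
    intro r hr
    have hr' := Ico_subset_Icc_self hr
    rw [add_zero, hf_eq, norm_smul_of_nonneg hr.1, ← mul_assoc]
    refine (norm_riccatiRHS_sub_le _ _ _).trans (mul_le_mul_of_nonneg_right ?_ (norm_nonneg _))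
    linarith [hK₁ r hr', hK₂ r hr', hc r hr']
  have hf0 := norm_le_gronwallBound_of_norm_deriv_right_le hf hf' (by simp [f] : ‖f 0‖ ≤ 0)
    hbound b ⟨hb.le, le_rfl⟩
  rw [gronwallBound_ε0_δ0, norm_le_zero_iff, hf_eq, smul_eq_zero, sub_eq_zero] at hf0
  exact hf0.resolve_left hb.ne'

theorem unique {a₁ a₂ : ℝ → E} (h₁ : IsRiccatiRaySolution a₁ c b)
    (h₂ : IsRiccatiRaySolution a₂ c b) (hc : ∀ r ∈ Icc 0 b, ‖c r‖ ≤ D * r) (hD : 0 ≤ D)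
    (hDb : D * b ≤ 1 / 10) (hb : 0 < b) : a₁ b = a₂ b := by
  obtain ⟨K₁, hK₁⟩ := h₁.exists_norm_le_mul hD hDb hc hb
  obtain ⟨K₂, hK₂⟩ := h₂.exists_norm_le_mul hD hDb hc hb
  exact h₁.apply_eq_of_norm_le_mul h₂ hc hK₁ hK₂ hb

end IsRiccatiRaySolution

end Ray

theorem canonical_ODE_uniqueness_general
    (n : ℕ) (η D : ℝ) (hD : 0 < D) (hηD : η ≤ (10 * D)⁻¹)
    (C A₁ A₂ : EuclideanSpace ℝ (Fin n) →
      (EuclideanSpace ℝ (Fin n) →L[ℝ] EuclideanSpace ℝ (Fin n)))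
    (hC0 : C 0 = 0)
    (hCbound : ∀ x ∈ ball (0 : EuclideanSpace ℝ (Fin n)) η, ‖C x‖ ≤ D * ‖x‖)
    (hA₁cont : ContinuousOn A₁ (ball 0 η)) (hA₁0 : A₁ 0 = 0)
    (hA₂cont : ContinuousOn A₂ (ball 0 η)) (hA₂0 : A₂ 0 = 0)
    (hA₁ode : ∀ θ : EuclideanSpace ℝ (Fin n), ‖θ‖ = 1 →
      ∀ r ∈ Set.Ioo (0 : ℝ) η,
        HasDerivAt (fun ρ : ℝ => ρ • A₁ (ρ • θ))
          (-(A₁ (r • θ) * A₁ (r • θ)) - C (r • θ) * A₁ (r • θ) - C (r • θ)) r)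
    (hA₂ode : ∀ θ : EuclideanSpace ℝ (Fin n), ‖θ‖ = 1 →
      ∀ r ∈ Set.Ioo (0 : ℝ) η,
        HasDerivAt (fun ρ : ℝ => ρ • A₂ (ρ • θ))
          (-(A₂ (r • θ) * A₂ (r • θ)) - C (r • θ) * A₂ (r • θ) - C (r • θ)) r) :
    Set.EqOn A₁ A₂ (ball 0 η) := by
  intro x hx
  rcases eq_or_ne x 0 with rfl | hx0
  · rw [hA₁0, hA₂0]
  have hb : 0 < ‖x‖ := norm_pos_iff.2 hx0
  have hbη : ‖x‖ < η := mem_ball_zero_iff.1 hx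
  set θ := ‖x‖⁻¹ • x
  have hθ : ‖θ‖ = 1 := by rw [norm_smul, norm_inv, norm_norm, inv_mul_cancel₀ hb.ne']
  have hc : ∀ r ∈ Icc 0 ‖x‖, ‖C (r • θ)‖ ≤ D * r := fun r hr => by
    simpa only [norm_smul_of_nonneg hr.1, hθ, mul_one] using
      hCbound _ (mapsTo_smul_Icc_ball hθ hbη hr)
  have hDb : D * ‖x‖ ≤ 1 / 10 :=
    calc D * ‖x‖ ≤ D * (10 * D)⁻¹ := by gcongr; exact hbη.le.trans hηD
      _ = 1 / 10 := by field_simp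
  have hray := (IsRiccatiRaySolution.of_ray hθ hb hbη hA₁cont hA₁0 hC0 (hA₁ode θ hθ)).unique
    (.of_ray hθ hb hbη hA₂cont hA₂0 hC0 (hA₂ode θ hθ)) hc hD.le hDb hb
  simpa only [θ, smul_smul, mul_inv_cancel₀ hb.ne', one_smul] using hray

/-- Uniqueness for the canonical-coordinates ODE.  Let
`C : Bⁿ(η) → 𝕄^{n×n}` be continuous with `C(0) = 0` and `‖C(x)‖ ≤ D|x|`, where
`η ≤ (10D)⁻¹`.  If `A₁, A₂` are continuous on `Bⁿ(η)`, vanish at `0`, and both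
satisfy `(d/dr)(r A(rθ)) = −A(rθ)² − C(rθ)A(rθ) − C(rθ)` for every unit vector
`θ` and `r ∈ (0, η)`, then `A₁ = A₂` on `Bⁿ(η)`.  (Matrices are modelled as
linear endomorphisms of `ℝⁿ` with the operator norm.) -/
theorem canonical_ODE_uniqueness
    (n : ℕ) (η D : ℝ) (hη : 0 < η) (hD : 0 < D) (hηD : η ≤ (10 * D)⁻¹)
    (C A₁ A₂ : EuclideanSpace ℝ (Fin n) →
      (EuclideanSpace ℝ (Fin n) →L[ℝ] EuclideanSpace ℝ (Fin n)))
    (hCcont : ContinuousOn C (ball 0 η)) (hC0 : C 0 = 0)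
    (hCbound : ∀ x ∈ ball (0 : EuclideanSpace ℝ (Fin n)) η, ‖C x‖ ≤ D * ‖x‖)
    (hA₁cont : ContinuousOn A₁ (ball 0 η)) (hA₁0 : A₁ 0 = 0)
    (hA₂cont : ContinuousOn A₂ (ball 0 η)) (hA₂0 : A₂ 0 = 0)
    (hA₁ode : ∀ θ : EuclideanSpace ℝ (Fin n), ‖θ‖ = 1 →
      ∀ r ∈ Set.Ioo (0 : ℝ) η,
        HasDerivAt (fun ρ : ℝ => ρ • A₁ (ρ • θ))
          (-(A₁ (r • θ) * A₁ (r • θ)) - C (r • θ) * A₁ (r • θ) - C (r • θ)) r)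
    (hA₂ode : ∀ θ : EuclideanSpace ℝ (Fin n), ‖θ‖ = 1 →
      ∀ r ∈ Set.Ioo (0 : ℝ) η,
        HasDerivAt (fun ρ : ℝ => ρ • A₂ (ρ • θ))
          (-(A₂ (r • θ) * A₂ (r • θ)) - C (r • θ) * A₂ (r • θ) - C (r • θ)) r) :
    Set.EqOn A₁ A₂ (ball 0 η) :=
  canonical_ODE_uniqueness_general n η D hD hηD C A₁ A₂ hC0 hCbound hA₁cont hA₁0 hA₂cont hA₂0 hA₁ode
    hA₂ode
end

section
/- Existence and bounds for the canonical-coordinates ODE: let C ∈ C(B^n(η); 𝕄^{n×n}) with C(0) = 0 and ‖C(x)‖ ≤ D|x| for x ∈ B^n(η), where η ≤ (10D)⁻¹. Then there exists a continuous A : B^n(η) → 𝕄^{n×n} with A(0) = 0 satisfying (d/dr)(rA(rθ)) = −A(rθ)² − C(rθ)A(rθ) − C(rθ) in the integrated sense A(x) = ∫₀¹ [−A(sx)² − C(sx)A(sx) − C(sx)] ds, and this solution satisfies ‖A(x)‖ ≤ (5/8)D|x| and ‖A(x)‖ ≤ 1/16 for all x ∈ B^n(η). -/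
open Metric intervalIntegral
open Set BoundedContinuousFunction

/-! The integrated equation says that `A` is a fixed point of
`T A (x) = ∫₀¹ (-A(sx)² - C(sx) A(sx) - C(sx)) ds`. We let `T` act on bounded continuous functions
on the ball with the sup norm. Since `‖C x‖ ≤ D |x|` and `D η ≤ 1/10`, `T` maps the closed set
`{A | ‖A x‖ ≤ (5/8) D |x|}` into itself. On that set `‖A‖ ≤ 1/16` and `‖C‖ ≤ 1/10`, so `T` is a
contraction with constant `1/16 + 1/16 + 1/10 = 9/40`, and Banach's fixed point theorem gives the
solution. -/

lemma norm_neg_sub_sub_le {G : Type*} [SeminormedAddGroup G] (x y z : G) :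
    ‖-x - y - z‖ ≤ ‖x‖ + ‖y‖ + ‖z‖ := by
  simpa only [sub_eq_add_neg, norm_neg] using norm_add₃_le (a := -x) (b := -y) (c := -z)

/-- The right-hand side of the Riccati equation `d/dr (r A(rθ)) = -A² - C A - C`. -/
def riccati {R : Type*} [Ring R] (c a : R) : R := -(a * a) - c * a - c

section NormedRing

variable {R : Type*} [NormedRing R]

lemma norm_riccati_le (c a : R) : ‖riccati c a‖ ≤ ‖a‖ * ‖a‖ + ‖c‖ * ‖a‖ + ‖c‖ :=
  calc ‖riccati c a‖ ≤ ‖a * a‖ + ‖c * a‖ + ‖c‖ := norm_neg_sub_sub_le _ _ _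
    _ ≤ ‖a‖ * ‖a‖ + ‖c‖ * ‖a‖ + ‖c‖ := by gcongr <;> exact norm_mul_le _ _

lemma riccati_sub_riccati (c a b : R) :
    riccati c a - riccati c b = -(a * (a - b)) - (a - b) * b - c * (a - b) := by
  unfold riccati; noncomm_ring

lemma norm_riccati_sub_riccati_le (c a b : R) :
    ‖riccati c a - riccati c b‖ ≤ (‖a‖ + ‖b‖ + ‖c‖) * ‖a - b‖ :=
  calc ‖riccati c a - riccati c b‖ ≤ ‖a * (a - b)‖ + ‖(a - b) * b‖ + ‖c * (a - b)‖ := by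
        rw [riccati_sub_riccati]; exact norm_neg_sub_sub_le _ _ _
    _ ≤ ‖a‖ * ‖a - b‖ + ‖a - b‖ * ‖b‖ + ‖c‖ * ‖a - b‖ := by
        gcongr <;> exact norm_mul_le _ _
    _ = (‖a‖ + ‖b‖ + ‖c‖) * ‖a - b‖ := by ring

end NormedRing

section Ball

variable {E : Type*} [NormedAddCommGroup E] [NormedSpace ℝ E] {η : ℝ}

/-- `s • x` with `s` clamped to `[0, 1]`, so that it stays in the ball; only `s ∈ [0, 1]` is ever
integrated over. -/
noncomputable def ballHomothety (x : ball (0 : E) η) (s : ℝ) : ball (0 : E) η :=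
  ⟨(projIcc 0 1 zero_le_one s : ℝ) • (x : E), by
    obtain ⟨h₀, h₁⟩ := (projIcc 0 1 zero_le_one s).2
    rw [mem_ball_zero_iff, norm_smul, Real.norm_of_nonneg h₀]
    exact (mul_le_of_le_one_left (norm_nonneg _) h₁).trans_lt (mem_ball_zero_iff.mp x.2)⟩

lemma coe_ballHomothety (x : ball (0 : E) η) {s : ℝ} (hs : s ∈ Icc (0 : ℝ) 1) :
    (ballHomothety x s : E) = s • (x : E) := by
  simp [ballHomothety, projIcc_of_mem zero_le_one hs]

lemma continuous_ballHomothety :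
    Continuous fun p : ball (0 : E) η × ℝ => ballHomothety p.1 p.2 :=
  ((continuous_subtype_val.comp (continuous_projIcc.comp continuous_snd)).smul
    (continuous_subtype_val.comp continuous_fst)).subtype_mk _

variable {R : Type*} [NormedAddCommGroup R] [NormedSpace ℝ R]

omit [NormedSpace ℝ R] in
lemma intervalIntegrable_comp_ballHomothety (G : ball (0 : E) η →ᵇ R) (x : ball (0 : E) η) :
    IntervalIntegrable (fun s => G (ballHomothety x s)) MeasureTheory.volume 0 1 :=
  (G.continuous.comp (continuous_ballHomothety.comp (Continuous.prodMk_right x))).intervalIntegrable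
    0 1

noncomputable def radialAverage (G : ball (0 : E) η →ᵇ R) : ball (0 : E) η →ᵇ R :=
  .ofNormedAddCommGroup (fun x => ∫ s in (0 : ℝ)..1, G (ballHomothety x s))
    (continuous_parametric_intervalIntegral_of_continuous'
      (f := fun x s => G (ballHomothety x s)) (G.continuous.comp continuous_ballHomothety) 0 1)
    ‖G‖ fun x => by
      simpa using norm_integral_le_of_norm_le_const (a := 0) (b := 1)
        fun s _ => G.norm_coe_le_norm (ballHomothety x s)

lemma radialAverage_apply (G : ball (0 : E) η →ᵇ R) (x : ball (0 : E) η) :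
    radialAverage G x = ∫ s in (0 : ℝ)..1, G (ballHomothety x s) := rfl

lemma norm_radialAverage_le (G : ball (0 : E) η →ᵇ R) : ‖radialAverage G‖ ≤ ‖G‖ :=
  norm_ofNormedAddCommGroup_le _ (norm_nonneg G) _

lemma radialAverage_sub (G H : ball (0 : E) η →ᵇ R) :
    radialAverage (G - H) = radialAverage G - radialAverage H := by
  ext x
  exact integral_sub (intervalIntegrable_comp_ballHomothety G x)
    (intervalIntegrable_comp_ballHomothety H x)

lemma norm_radialAverage_apply_le {G : ball (0 : E) η →ᵇ R} {a b : ℝ}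
    (hG : ∀ y, ‖G y‖ ≤ a * ‖(y : E)‖ ^ 2 + b * ‖(y : E)‖) (x : ball (0 : E) η) :
    ‖radialAverage G x‖ ≤ a * ‖(x : E)‖ ^ 2 / 3 + b * ‖(x : E)‖ / 2 := by
  have hbound : ∀ s ∈ Ioc (0 : ℝ) 1,
      ‖G (ballHomothety x s)‖ ≤ a * ‖(x : E)‖ ^ 2 * s ^ 2 + b * ‖(x : E)‖ * s := by
    intro s hs
    have hs' : s ∈ Icc (0 : ℝ) 1 := Ioc_subset_Icc_self hs
    have := hG (ballHomothety x s)
    rw [coe_ballHomothety x hs', norm_smul, Real.norm_of_nonneg hs'.1] at this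
    linarith
  calc ‖radialAverage G x‖
      ≤ ∫ s in (0 : ℝ)..1, (a * ‖(x : E)‖ ^ 2 * s ^ 2 + b * ‖(x : E)‖ * s) :=
        intervalIntegral.norm_integral_le_of_norm_le zero_le_one
          (Filter.Eventually.of_forall hbound) ((by fun_prop : Continuous _).intervalIntegrable 0 1)
    _ = a * ‖(x : E)‖ ^ 2 / 3 + b * ‖(x : E)‖ / 2 := by
        rw [integral_add ((by fun_prop : Continuous _).intervalIntegrable 0 1)
          ((by fun_prop : Continuous _).intervalIntegrable 0 1), integral_const_mul,
          integral_const_mul, integral_pow, integral_id]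
        ring

end Ball

section FixedPoint

variable {E : Type*} [NormedAddCommGroup E] [NormedSpace ℝ E] {η : ℝ}
  {R : Type*} [NormedRing R] [NormedSpace ℝ R]

def linearlyBounded (K : ℝ) : Set (ball (0 : E) η →ᵇ R) := {A | ∀ x, ‖A x‖ ≤ K * ‖(x : E)‖}

omit [NormedSpace ℝ E] [NormedSpace ℝ R] in
lemma isClosed_linearlyBounded (K : ℝ) :
    IsClosed (linearlyBounded K : Set (ball (0 : E) η →ᵇ R)) := by
  simp only [linearlyBounded, ofPred_forall]
  exact isClosed_iInter fun x =>
    isClosed_le (continuous_norm.comp (continuous_eval_const x)) continuous_const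

omit [NormedSpace ℝ E] [NormedSpace ℝ R] in
lemma norm_le_of_mem_linearlyBounded {K M : ℝ} {A : ball (0 : E) η →ᵇ R}
    (hA : A ∈ linearlyBounded K) (hK : 0 ≤ K) (hM : 0 ≤ M) (hKM : K * η ≤ M) : ‖A‖ ≤ M :=
  (norm_le hM).mpr fun x => (hA x).trans <|
    (mul_le_mul_of_nonneg_left (mem_ball_zero_iff.mp x.2).le hK).trans hKM

noncomputable def riccatiMap (C A : ball (0 : E) η →ᵇ R) : ball (0 : E) η →ᵇ R :=
  radialAverage (riccati C A)

lemma riccatiMap_apply (C A : ball (0 : E) η →ᵇ R) (x : ball (0 : E) η) :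
    riccatiMap C A x =
      ∫ s in (0 : ℝ)..1, riccati (C (ballHomothety x s)) (A (ballHomothety x s)) := by
  simp [riccatiMap, radialAverage_apply, riccati]

variable {D : ℝ} {C : ball (0 : E) η →ᵇ R}

/-- The linear term `-C` alone contributes `D |x| / 2`; the margin up to `5/8` absorbs the
quadratic terms as long as `D |x| ≤ 1/10`. -/
lemma mapsTo_riccatiMap (hD : 0 ≤ D) (hDη : D * η ≤ 1 / 10) (hC : C ∈ linearlyBounded D) :
    MapsTo (riccatiMap C) (linearlyBounded (5 / 8 * D)) (linearlyBounded (5 / 8 * D)) := by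
  intro A hA x
  have hquad : ∀ y, ‖riccati C A y‖ ≤ 65 / 64 * D ^ 2 * ‖(y : E)‖ ^ 2 + D * ‖(y : E)‖ := by
    intro y
    have hAy := hA y
    have hCy := hC y
    have := norm_riccati_le (C y) (A y)
    simp only [riccati, coe_sub, coe_neg, coe_mul, Pi.sub_apply, Pi.neg_apply,
      Pi.mul_apply] at this ⊢
    nlinarith [norm_nonneg (A y), norm_nonneg (C y), mul_nonneg hD (norm_nonneg (y : E))]
  have hDx : D * ‖(x : E)‖ ≤ 1 / 10 :=
    (mul_le_mul_of_nonneg_left (mem_ball_zero_iff.mp x.2).le hD).trans hDη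
  have hDx₀ : 0 ≤ D * ‖(x : E)‖ := mul_nonneg hD (norm_nonneg _)
  calc ‖riccatiMap C A x‖ ≤ 65 / 64 * D ^ 2 * ‖(x : E)‖ ^ 2 / 3 + D * ‖(x : E)‖ / 2 :=
        norm_radialAverage_apply_le hquad x
    _ ≤ 5 / 8 * D * ‖(x : E)‖ := by nlinarith

lemma dist_riccatiMap_le (hD : 0 ≤ D) (hDη : D * η ≤ 1 / 10) (hC : C ∈ linearlyBounded D)
    {A B : ball (0 : E) η →ᵇ R} (hA : A ∈ linearlyBounded (5 / 8 * D))
    (hB : B ∈ linearlyBounded (5 / 8 * D)) :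
    dist (riccatiMap C A) (riccatiMap C B) ≤ 9 / 40 * dist A B := by
  have hA' := norm_le_of_mem_linearlyBounded (M := 1 / 16) hA (by positivity) (by norm_num)
    (by linarith)
  have hB' := norm_le_of_mem_linearlyBounded (M := 1 / 16) hB (by positivity) (by norm_num)
    (by linarith)
  have hC' := norm_le_of_mem_linearlyBounded hC hD (by norm_num) hDη
  rw [dist_eq_norm, dist_eq_norm, riccatiMap, riccatiMap, ← radialAverage_sub]
  calc _ ≤ ‖riccati C A - riccati C B‖ := norm_radialAverage_le _
    _ ≤ (‖A‖ + ‖B‖ + ‖C‖) * ‖A - B‖ := norm_riccati_sub_riccati_le C A B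
    _ ≤ 9 / 40 * ‖A - B‖ := by gcongr; linarith

lemma exists_fixedPoint_riccatiMap [CompleteSpace R] (hD : 0 ≤ D) (hDη : D * η ≤ 1 / 10)
    (hC : C ∈ linearlyBounded D) :
    ∃ A ∈ linearlyBounded (5 / 8 * D), riccatiMap C A = A := by
  have hmaps := mapsTo_riccatiMap hD hDη hC
  have hcontr : ContractingWith (9 / 40) (hmaps.restrict _ _ _) :=
    ⟨by rw [← NNReal.coe_lt_coe]; norm_num,
      LipschitzWith.of_dist_le_mul fun A B => by
        simpa [Subtype.dist_eq] using dist_riccatiMap_le hD hDη hC A.2 B.2⟩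
  have h0 : (0 : ball (0 : E) η →ᵇ R) ∈ linearlyBounded (5 / 8 * D) := fun x => by
    rw [coe_zero, Pi.zero_apply, norm_zero]
    positivity
  obtain ⟨A, hA, hfix, -⟩ := hcontr.exists_fixedPoint' (isClosed_linearlyBounded _).isComplete
    hmaps h0 (edist_ne_top _ _)
  exact ⟨A, hA, hfix⟩

open Classical in
noncomputable def extendBall (A : ball (0 : E) η →ᵇ R) (x : E) : R :=
  if hx : x ∈ ball (0 : E) η then A ⟨x, hx⟩ else 0

omit [NormedSpace ℝ E] [NormedSpace ℝ R] in
lemma extendBall_coe (A : ball (0 : E) η →ᵇ R) (y : ball (0 : E) η) : extendBall A y = A y := by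
  rw [extendBall, dif_pos y.2]

omit [NormedSpace ℝ E] [NormedSpace ℝ R] in
lemma continuousOn_extendBall (A : ball (0 : E) η →ᵇ R) :
    ContinuousOn (extendBall A) (ball 0 η) := by
  rw [continuousOn_iff_continuous_domRestrict]
  convert A.continuous using 1
  exact funext (extendBall_coe A)

theorem exists_riccati_solution [CompleteSpace R] {D : ℝ} (hD : 0 ≤ D) (hDη : D * η ≤ 1 / 10)
    {C : E → R} (hCcont : ContinuousOn C (ball 0 η))
    (hCbound : ∀ x ∈ ball (0 : E) η, ‖C x‖ ≤ D * ‖x‖) :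
    ∃ A : E → R, ContinuousOn A (ball 0 η) ∧ A 0 = 0 ∧
      (∀ x ∈ ball (0 : E) η, A x = ∫ s in (0 : ℝ)..1, riccati (C (s • x)) (A (s • x))) ∧
      ∀ x ∈ ball (0 : E) η, ‖A x‖ ≤ 5 / 8 * D * ‖x‖ ∧ ‖A x‖ ≤ 1 / 16 := by
  let Cb : ball (0 : E) η →ᵇ R :=
    .ofNormedAddCommGroup (domRestrict _ C) (continuousOn_iff_continuous_domRestrict.mp hCcont)
      (1 / 10) fun y => (hCbound y y.2).trans <|
        (mul_le_mul_of_nonneg_left (mem_ball_zero_iff.mp y.2).le hD).trans hDη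
  obtain ⟨A, hA, hfix⟩ := exists_fixedPoint_riccatiMap hD hDη (C := Cb) fun y => hCbound y y.2
  refine ⟨extendBall A, continuousOn_extendBall A, ?_, fun x hx => ?_, fun x hx => ?_⟩
  · by_cases h0 : (0 : E) ∈ ball 0 η
    · simpa [← extendBall_coe] using hA ⟨0, h0⟩
    · rw [extendBall, dif_neg h0]
  · rw [extendBall_coe A ⟨x, hx⟩, ← DFunLike.congr_fun hfix, riccatiMap_apply]
    refine integral_congr fun s hs => ?_
    rw [uIcc_of_le zero_le_one] at hs
    show riccati (C (ballHomothety ⟨x, hx⟩ s)) (A (ballHomothety ⟨x, hx⟩ s)) = _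
    rw [← extendBall_coe A, coe_ballHomothety _ hs]
  · have hAx := hA ⟨x, hx⟩
    rw [extendBall_coe A ⟨x, hx⟩]
    refine ⟨hAx, hAx.trans ?_⟩
    nlinarith [mem_ball_zero_iff.mp hx]

end FixedPoint

theorem canonical_ODE_existence_general
    (n : ℕ) (η D : ℝ) (hD : 0 < D) (hηD : η ≤ (10 * D)⁻¹)
    (C : EuclideanSpace ℝ (Fin n) →
      (EuclideanSpace ℝ (Fin n) →L[ℝ] EuclideanSpace ℝ (Fin n)))
    (hCcont : ContinuousOn C (ball 0 η))
    (hCbound : ∀ x ∈ ball (0 : EuclideanSpace ℝ (Fin n)) η, ‖C x‖ ≤ D * ‖x‖) :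
    ∃ A : EuclideanSpace ℝ (Fin n) →
      (EuclideanSpace ℝ (Fin n) →L[ℝ] EuclideanSpace ℝ (Fin n)),
      ContinuousOn A (ball 0 η) ∧ A 0 = 0 ∧
      (∀ x ∈ ball (0 : EuclideanSpace ℝ (Fin n)) η,
        A x = ∫ s in (0:ℝ)..1,
          (-(A (s • x) * A (s • x)) - C (s • x) * A (s • x) - C (s • x))) ∧
      (∀ x ∈ ball (0 : EuclideanSpace ℝ (Fin n)) η,
        ‖A x‖ ≤ (5 / 8) * D * ‖x‖ ∧ ‖A x‖ ≤ 1 / 16) := by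
  have hDη : D * η ≤ 1 / 10 := by
    calc D * η ≤ D * (10 * D)⁻¹ := mul_le_mul_of_nonneg_left hηD hD.le
      _ = 1 / 10 := by field_simp
  exact exists_riccati_solution hD.le hDη hCcont hCbound

/-- Existence and bounds for the canonical-coordinates ODE.  Let
`C : Bⁿ(η) → 𝕄^{n×n}` be continuous with `C(0) = 0` and `‖C(x)‖ ≤ D|x|`, where
`η ≤ (10D)⁻¹`.  Then there is a continuous `A : Bⁿ(η) → 𝕄^{n×n}` with `A(0) = 0`
satisfying the ODE in the integrated form
`A(x) = ∫₀¹ [−A(sx)² − C(sx)A(sx) − C(sx)] ds`, and moreover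
`‖A(x)‖ ≤ (5/8) D |x|` and `‖A(x)‖ ≤ 1/16` on `Bⁿ(η)`. -/
theorem canonical_ODE_existence
    (n : ℕ) (η D : ℝ) (hη : 0 < η) (hD : 0 < D) (hηD : η ≤ (10 * D)⁻¹)
    (C : EuclideanSpace ℝ (Fin n) →
      (EuclideanSpace ℝ (Fin n) →L[ℝ] EuclideanSpace ℝ (Fin n)))
    (hCcont : ContinuousOn C (ball 0 η)) (hC0 : C 0 = 0)
    (hCbound : ∀ x ∈ ball (0 : EuclideanSpace ℝ (Fin n)) η, ‖C x‖ ≤ D * ‖x‖) :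
    ∃ A : EuclideanSpace ℝ (Fin n) →
      (EuclideanSpace ℝ (Fin n) →L[ℝ] EuclideanSpace ℝ (Fin n)),
      ContinuousOn A (ball 0 η) ∧ A 0 = 0 ∧
      (∀ x ∈ ball (0 : EuclideanSpace ℝ (Fin n)) η,
        A x = ∫ s in (0:ℝ)..1,
          (-(A (s • x) * A (s • x)) - C (s • x) * A (s • x) - C (s • x))) ∧
      (∀ x ∈ ball (0 : EuclideanSpace ℝ (Fin n)) η,
        ‖A x‖ ≤ (5 / 8) * D * ‖x‖ ∧ ‖A x‖ ≤ 1 / 16) :=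
  canonical_ODE_existence_general n η D hD hηD C hCcont hCbound
end

section
/- Algebra property of difference-quotient spaces: with the spaces C^{m,l,ω} on B^n(η) as defined via iterated differences Δ_h and derivatives (norm Σ_{|β|≤m} Σ_{j=0}^{l} sup_{(x,h)∈Ω_j} ω(|h|)^{−j}‖Δ_h^j ∂_x^β A(x)‖), the product of two matrix-valued functions satisfies: if A, B ∈ C^{m,l,ω} then AB ∈ C^{m,l,ω} and ‖AB‖_{C^{m,l,ω}} ≤ C_{m,l} ‖A‖_{C^{m,l,ω}} ‖B‖_{C^{m,l,ω}}, where C_{m,l} depends only on m and l. Moreover, for j ≤ m and k ≤ l, ‖A‖_{C^{j,k,ω}} ≤ ‖A‖_{C^{m,l,ω}}. -/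
open Metric

/-- The iterated coordinate partial derivative `∂_x^β B` for an ordered
multi-index (list of coordinate directions) `β`. -/
noncomputable def pderivList {N : ℕ} {V : Type*} [NormedAddCommGroup V]
    [NormedSpace ℝ V] :
    List (Fin N) → (EuclideanSpace ℝ (Fin N) → V) → (EuclideanSpace ℝ (Fin N) → V)
  | [], B => B
  | i :: L, B => fun x => fderiv ℝ (pderivList L B) x (EuclideanSpace.single i 1)

/-- The iterated difference operator `Δ_h^j B(x)`, where `Δ_h B(x) = B(x+h) − B(x)`. -/
def iterDiff {N : ℕ} {V : Type*} [AddCommGroup V] :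
    ℕ → EuclideanSpace ℝ (Fin N) → (EuclideanSpace ℝ (Fin N) → V) →
      (EuclideanSpace ℝ (Fin N) → V)
  | 0, _, B => B
  | j + 1, h, B => fun x => iterDiff j h B (x + h) - iterDiff j h B x

/-- `DQBound N ν m l η ω F K` : componentwise bound for the `C^{m,l,ω}` norm of a
matrix-valued function `F` on `Bⁿ(η)`: for every multi-index `β` (a list of
directions) with `|β| ≤ m`, every `0 ≤ j ≤ l`, and every admissible `(x,h)`,
`ω(|h|)^{-j} ‖Δ_h^j ∂_x^β F(x)‖ ≤ K`. -/
def DQBound (N ν m l : ℕ) (η : ℝ) (ω : ℝ → ℝ)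
    (F : EuclideanSpace ℝ (Fin N) →
      (EuclideanSpace ℝ (Fin ν) →L[ℝ] EuclideanSpace ℝ (Fin ν)))
    (K : ℝ) : Prop :=
  ∀ L : List (Fin N), L.length ≤ m → ∀ j ≤ l,
    ∀ x h : EuclideanSpace ℝ (Fin N), h ≠ 0 →
    (∀ i : ℕ, i ≤ j → x + (i : ℝ) • h ∈ ball (0 : EuclideanSpace ℝ (Fin N)) η) →
    ‖iterDiff j h (pderivList L F) x‖ ≤ ω ‖h‖ ^ j * K

/-!
By the Leibniz rule, `∂^β (AB)` is the sum, over the `2^|β|` ways of distributing the directions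
of `β` into `β₁` and `β₂`, of `∂^{β₁}A · ∂^{β₂}B`, and by the discrete Leibniz rule
`Δ_h^j (PQ)(x) = ∑_{i+k=j} C(j,i) Δ_h^i P(x) · Δ_h^k Q(x + i h)`.
Each product `Δ_h^i ∂^{β₁}A(x) · Δ_h^k ∂^{β₂}B(x + i h)` is at most
`ω(|h|)^i K_A · ω(|h|)^k K_B = ω(|h|)^j K_A K_B`, and the terms number `2^{|β| + j} ≤ 2^{m + l}`
counted with their binomial multiplicities, so `C_{m,l} = 2^{m + l}` works.
-/

open Finset

theorem fderiv_list_sum_apply {𝕜 E F ι : Type*} [NontriviallyNormedField 𝕜]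
    [NormedAddCommGroup E] [NormedSpace 𝕜 E] [NormedAddCommGroup F] [NormedSpace 𝕜 F]
    (T : List ι) {f : ι → E → F} {x : E} (hf : ∀ p ∈ T, DifferentiableAt 𝕜 (f p) x) (v : E) :
    fderiv 𝕜 (fun y => (T.map (f · y)).sum) x v = (T.map fun p => fderiv 𝕜 (f p) x v).sum := by
  have hsum : HasFDerivAt (fun y => (T.map (f · y)).sum)
      (T.map fun p => fderiv 𝕜 (f p) x).sum x := by
    induction T with
    | nil => simpa using hasFDerivAt_const (0 : F) x
    | cons a T ih =>
      simp only [List.forall_mem_cons] at hf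
      simp only [List.map_cons, List.sum_cons]
      exact hf.1.hasFDerivAt.add (ih hf.2)
  rw [hsum.fderiv]
  clear hsum hf
  induction T <;> simp_all

theorem norm_list_sum_map_le {ι V : Type*} [SeminormedAddCommGroup V] (T : List ι) {f : ι → V}
    {c : ℝ} (hf : ∀ p ∈ T, ‖f p‖ ≤ c) : ‖(T.map f).sum‖ ≤ T.length * c := by
  induction T with
  | nil => simp
  | cons a T ih =>
    simp only [List.forall_mem_cons] at hf
    simp only [List.map_cons, List.sum_cons, List.length_cons]
    push_cast
    linarith [norm_add_le (f a) (T.map f).sum, hf.1, ih hf.2]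

theorem norm_sum_antidiagonal_choose_smul_le {V : Type*} [SeminormedAddCommGroup V] {j : ℕ}
    {g : ℕ × ℕ → V} {c : ℝ} (hg : ∀ ij ∈ antidiagonal j, ‖g ij‖ ≤ c) :
    ‖∑ ij ∈ antidiagonal j, j.choose ij.1 • g ij‖ ≤ 2 ^ j * c := by
  calc ‖∑ ij ∈ antidiagonal j, j.choose ij.1 • g ij‖
      ≤ ∑ ij ∈ antidiagonal j, (j.choose ij.1 : ℝ) * c :=
        (norm_sum_le _ _).trans <| sum_le_sum fun ij hij =>
          norm_nsmul_le.trans (by gcongr; exact hg ij hij)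
    _ = 2 ^ j * c := by
        rw [← sum_mul, Nat.sum_antidiagonal_eq_sum_range_succ_mk]
        simp [← Nat.cast_sum, Nat.sum_range_choose]

def unshuffles {α : Type*} : List α → List (List α × List α)
  | [] => [([], [])]
  | a :: L => (unshuffles L).map (fun p => (a :: p.1, p.2)) ++
      (unshuffles L).map (fun p => (p.1, a :: p.2))

theorem length_unshuffles {α : Type*} (L : List α) : (unshuffles L).length = 2 ^ L.length := by
  induction L with
  | nil => rfl
  | cons a L ih => simp [unshuffles, ih, pow_succ, mul_two]

theorem length_add_length_of_mem_unshuffles {α : Type*} {L : List α} {p : List α × List α}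
    (hp : p ∈ unshuffles L) : p.1.length + p.2.length = L.length := by
  induction L generalizing p with
  | nil => simp_all [unshuffles]
  | cons a L ih =>
    simp only [unshuffles, List.mem_append, List.mem_map] at hp
    rcases hp with ⟨q, hq, rfl⟩ | ⟨q, hq, rfl⟩ <;> simp [← ih hq] <;> omega

section NatSteps

variable {E : Type*} [AddCommGroup E] [Module ℝ E]

theorem add_natCast_smul_add_natCast_smul (x h : E) (a b : ℕ) :
    x + (a : ℝ) • h + (b : ℝ) • h = x + ((a + b : ℕ) : ℝ) • h := by
  push_cast; rw [add_smul, add_assoc]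

theorem add_add_natCast_smul (x h : E) (i : ℕ) :
    x + h + (i : ℝ) • h = x + ((i + 1 : ℕ) : ℝ) • h := by
  push_cast; rw [add_smul, one_smul]; abel

end NatSteps

section LeibnizRules

variable {N : ℕ}

local notation "𝔼" n => EuclideanSpace ℝ (Fin n)

theorem iterDiff_congr {V : Type*} [AddCommGroup V] {F G : (𝔼 N) → V} {j : ℕ} {h x : 𝔼 N}
    (hFG : ∀ i ≤ j, F (x + (i : ℝ) • h) = G (x + (i : ℝ) • h)) :
    iterDiff j h F x = iterDiff j h G x := by
  induction j generalizing x with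
  | zero => simpa [iterDiff] using hFG 0 le_rfl
  | succ j ih =>
    have hshift : ∀ i ≤ j, F (x + h + (i : ℝ) • h) = G (x + h + (i : ℝ) • h) := fun i hi => by
      rw [add_add_natCast_smul]; exact hFG (i + 1) (by omega)
    simp only [iterDiff, ih hshift, ih fun i hi => hFG i (by omega)]

theorem iterDiff_list_sum {V ι : Type*} [AddCommGroup V] (T : List ι) (f : ι → (𝔼 N) → V)
    (j : ℕ) (h x : 𝔼 N) :
    iterDiff j h (fun y => (T.map (f · y)).sum) x = (T.map fun p => iterDiff j h (f p) x).sum := by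
  induction j generalizing x with
  | zero => rfl
  | succ j ih =>
    simp only [iterDiff, ih]
    clear ih
    induction T with
    | nil => simp
    | cons a T ihT => simp only [List.map_cons, List.sum_cons, ← ihT]; abel

theorem iterDiff_mul {R : Type*} [Ring R] (P Q : (𝔼 N) → R) (j : ℕ) (h x : 𝔼 N) :
    iterDiff j h (fun y => P y * Q y) x =
      ∑ ij ∈ antidiagonal j,
        j.choose ij.1 • (iterDiff ij.1 h P x * iterDiff ij.2 h Q (x + (ij.1 : ℝ) • h)) := by
  induction j generalizing x with
  | zero => simp [iterDiff]
  | succ j ih =>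
    rw [sum_antidiagonal_choose_succ_nsmul
      (fun a b => iterDiff a h P x * iterDiff b h Q (x + (a : ℝ) • h)), ← sum_add_distrib]
    simp only [iterDiff, ih, ← sum_sub_distrib]
    -- termwise `Δ_h (f g)(x) = Δ_h f(x) · g(x + h) + f(x) · Δ_h g(x)`, plus Pascal's rule
    refine sum_congr rfl fun ij hij => ?_
    rw [Nat.choose_symm_of_eq_add (mem_antidiagonal.1 hij).symm, ← smul_sub, ← smul_add,
      add_add_natCast_smul, add_right_comm, add_add_natCast_smul]
    noncomm_ring

variable {V W : Type*} [NormedAddCommGroup V] [NormedSpace ℝ V] [NormedRing W] [NormedAlgebra ℝ W]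
  {s : Set (𝔼 N)} {m : ℕ}

theorem contDiffOn_pderivList {F : (𝔼 N) → V} (hs : IsOpen s) (hF : ContDiffOn ℝ m F s)
    {L : List (Fin N)} (hL : L.length ≤ m) :
    ContDiffOn ℝ (m - L.length : ℕ) (pderivList L F) s := by
  induction L with
  | nil => simpa [pderivList] using hF
  | cons i L ih =>
    simp only [List.length_cons] at hL
    have hderiv := (ih (by omega)).fderiv_of_isOpen hs (m := (m - (L.length + 1) : ℕ))
      (by norm_cast; omega)
    exact hderiv.clm_apply contDiffOn_const

theorem differentiableAt_pderivList {F : (𝔼 N) → V} (hs : IsOpen s) (hF : ContDiffOn ℝ m F s)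
    {L : List (Fin N)} (hL : L.length < m) {x : 𝔼 N} (hx : x ∈ s) :
    DifferentiableAt ℝ (pderivList L F) x :=
  ((contDiffOn_pderivList hs hF hL.le).differentiableOn (by norm_cast; omega)).differentiableAt
    (hs.mem_nhds hx)

theorem pderivList_mul {A B : (𝔼 N) → W} (hs : IsOpen s) (hA : ContDiffOn ℝ m A s)
    (hB : ContDiffOn ℝ m B s) {L : List (Fin N)} (hL : L.length ≤ m) {x : 𝔼 N} (hx : x ∈ s) :
    pderivList L (fun y => A y * B y) x =
      ((unshuffles L).map fun p => pderivList p.1 A x * pderivList p.2 B x).sum := by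
  induction L generalizing x with
  | nil => simp [pderivList, unshuffles]
  | cons i L ih =>
    simp only [List.length_cons] at hL
    have hdiff : ∀ p ∈ unshuffles L,
        DifferentiableAt ℝ (pderivList p.1 A) x ∧ DifferentiableAt ℝ (pderivList p.2 B) x :=
      fun p hp => have := length_add_length_of_mem_unshuffles hp
        ⟨differentiableAt_pderivList hs hA (by omega) hx,
          differentiableAt_pderivList hs hB (by omega) hx⟩
    have hloc : pderivList L (fun y => A y * B y) =ᶠ[nhds x]
        fun y => ((unshuffles L).map fun p => pderivList p.1 A y * pderivList p.2 B y).sum :=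
      Filter.eventually_of_mem (hs.mem_nhds hx) fun y hy => ih (by omega) (x := y) hy
    change fderiv ℝ _ x _ = _
    rw [hloc.fderiv_eq,
      fderiv_list_sum_apply (f := fun p y => pderivList p.1 A y * pderivList p.2 B y) _
        fun p hp => (hdiff p hp).1.mul (hdiff p hp).2]
    simp only [unshuffles, List.map_append, List.map_map, List.sum_append, ← List.sum_map_add]
    refine congrArg List.sum (List.map_congr_left fun p hp => ?_)
    rw [fderiv_fun_mul' (hdiff p hp).1 (hdiff p hp).2, add_comm]
    rfl

theorem iterDiff_pderivList_mul {A B : (𝔼 N) → W} (hs : IsOpen s) (hA : ContDiffOn ℝ m A s)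
    (hB : ContDiffOn ℝ m B s) {L : List (Fin N)} (hL : L.length ≤ m) {j : ℕ} {h x : 𝔼 N}
    (hx : ∀ i ≤ j, x + (i : ℝ) • h ∈ s) :
    iterDiff j h (pderivList L (fun y => A y * B y)) x =
      ((unshuffles L).map fun p => ∑ ij ∈ antidiagonal j, j.choose ij.1 •
        (iterDiff ij.1 h (pderivList p.1 A) x *
          iterDiff ij.2 h (pderivList p.2 B) (x + (ij.1 : ℝ) • h))).sum := by
  rw [iterDiff_congr
      (G := fun y => ((unshuffles L).map fun p => pderivList p.1 A y * pderivList p.2 B y).sum)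
      fun i hi => pderivList_mul hs hA hB hL (hx i hi),
    iterDiff_list_sum]
  simp only [iterDiff_mul]

end LeibnizRules

section DQBound

variable {N ν m l : ℕ} {η : ℝ} {ω : ℝ → ℝ}
  {A B : EuclideanSpace ℝ (Fin N) → (EuclideanSpace ℝ (Fin ν) →L[ℝ] EuclideanSpace ℝ (Fin ν))}
  {KA KB : ℝ}

theorem DQBound.mono (hA : DQBound N ν m l η ω A KA) {m' l' : ℕ} (hm : m' ≤ m) (hl : l' ≤ l) :
    DQBound N ν m' l' η ω A KA :=
  fun L hL j hj => hA L (hL.trans hm) j (hj.trans hl)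

theorem DQBound.mul (hA : ContDiffOn ℝ m A (ball 0 η)) (hB : ContDiffOn ℝ m B (ball 0 η))
    (hDA : DQBound N ν m l η ω A KA) (hDB : DQBound N ν m l η ω B KB) :
    DQBound N ν m l η ω (fun x => A x * B x) (2 ^ (m + l) * KA * KB) := by
  intro L hL j hj x h hh hx
  have hterm : ∀ p ∈ unshuffles L, ∀ ij ∈ antidiagonal j,
      ‖iterDiff ij.1 h (pderivList p.1 A) x *
        iterDiff ij.2 h (pderivList p.2 B) (x + (ij.1 : ℝ) • h)‖ ≤ ω ‖h‖ ^ j * KA * KB := by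
    intro p hp ij hij
    have hlen := length_add_length_of_mem_unshuffles hp
    replace hij : ij.1 + ij.2 = j := mem_antidiagonal.1 hij
    have hP := hDA p.1 (by omega) ij.1 (by omega) x h hh fun i hi => hx i (by omega)
    have hQ := hDB p.2 (by omega) ij.2 (by omega) (x + (ij.1 : ℝ) • h) h hh fun i hi => by
      rw [add_natCast_smul_add_natCast_smul]; exact hx (ij.1 + i) (by omega)
    calc _ ≤ _ := norm_mul_le _ _
      _ ≤ (ω ‖h‖ ^ ij.1 * KA) * (ω ‖h‖ ^ ij.2 * KB) :=
        mul_le_mul hP hQ (norm_nonneg _) ((norm_nonneg _).trans hP)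
      _ = ω ‖h‖ ^ j * KA * KB := by rw [← hij, pow_add]; ring
  have hbound_nonneg : 0 ≤ ω ‖h‖ ^ j * KA * KB := by
    have hA0 := hDA [] (Nat.zero_le m) j hj x h hh hx
    have hB0 := hDB [] (Nat.zero_le m) 0 (Nat.zero_le l) x h hh fun i hi => hx i (by omega)
    simp only [iterDiff, pderivList, pow_zero, one_mul] at hB0
    exact mul_nonneg ((norm_nonneg _).trans hA0) ((norm_nonneg _).trans hB0)
  rw [iterDiff_pderivList_mul isOpen_ball hA hB hL hx]
  calc _ ≤ (unshuffles L).length * (2 ^ j * (ω ‖h‖ ^ j * KA * KB)) :=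
        norm_list_sum_map_le _ fun p hp => norm_sum_antidiagonal_choose_smul_le (hterm p hp)
    _ = 2 ^ (L.length + j) * (ω ‖h‖ ^ j * KA * KB) := by
        rw [length_unshuffles]; push_cast; ring
    _ ≤ 2 ^ (m + l) * (ω ‖h‖ ^ j * KA * KB) := by gcongr; norm_num
    _ = ω ‖h‖ ^ j * (2 ^ (m + l) * KA * KB) := by ring

end DQBound

/-- Algebra property of the spaces `C^{m,l,ω}`: there is a
constant `C` depending only on `m` and `l` such that for all dimensions, balls,
nondecreasing weights `ω`, and matrix-valued `A, B ∈ C^{m,l,ω}` with norms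
bounded by `KA, KB`, the product `AB` lies in `C^{m,l,ω}` with norm bound
`C · KA · KB`.  Moreover `‖A‖_{C^{j,k,ω}} ≤ ‖A‖_{C^{m,l,ω}}` for `j ≤ m`, `k ≤ l`. -/
theorem Cmlomega_algebra (m l : ℕ) :
    ∃ C : ℝ, 0 < C ∧
      ∀ (N ν : ℕ) (η : ℝ), 0 < η →
      ∀ ω : ℝ → ℝ, (∀ a b : ℝ, 0 < a → a ≤ b → ω a ≤ ω b) →
        (∀ t : ℝ, 0 < t → 0 < ω t) →
      ∀ (A B : EuclideanSpace ℝ (Fin N) →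
          (EuclideanSpace ℝ (Fin ν) →L[ℝ] EuclideanSpace ℝ (Fin ν)))
        (KA KB : ℝ),
        ContDiffOn ℝ m A (ball 0 η) → ContDiffOn ℝ m B (ball 0 η) →
        DQBound N ν m l η ω A KA → DQBound N ν m l η ω B KB →
        DQBound N ν m l η ω (fun x => A x * B x) (C * KA * KB) ∧
        (∀ m' l' : ℕ, m' ≤ m → l' ≤ l → DQBound N ν m' l' η ω A KA) := by
  refine ⟨2 ^ (m + l), by positivity, ?_⟩
  intro N ν η _ ω _ _ A B KA KB hA hB hDA hDB
  exact ⟨hDA.mul hA hB hDB, fun _ _ hm hl => hDA.mono hm hl⟩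
end

section
/- Non-self-intersection of flows of small vector fields: there exists δ > 0 depending only on n such that the following holds. If Z is a C¹ vector field on an open set V ⊆ ℝⁿ with ‖Z‖_{C¹(V;ℝⁿ)} ≤ δ, then there does not exist x ∈ V with e^{tZ}x ∈ V for all t ∈ [0,1], e^{Z}x = x, and Z(x) ≠ 0. In other words, the time-one flow of a sufficiently small C¹ vector field has no nontrivial fixed points along trajectories that remain in V. -/
/-!
Let `S` be the maximal speed `‖Z (γ t)‖` on `[0, 1]` and `L` a bound for `‖DZ‖` along the curve.
The velocity `Z ∘ γ` has derivative `DZ (γ t) (Z (γ t))`, so it stays within `L S` of `Z x`;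
this gives `S ≤ ‖Z x‖ + L S`. Closing the loop, `0 = γ 1 - γ 0` differs from `Z x` by at most
`L S`, so `‖Z x‖ ≤ L S`. Hence `S ≤ 2 L S`, which forces `S = 0` once `L < 1/2`.
-/

open Set

variable {E : Type*} [NormedAddCommGroup E] [NormedSpace ℝ E]

theorem norm_sub_sub_smul_le_of_norm_deriv_sub_le {γ g : ℝ → E} {v : E} {C : ℝ}
    (hγ : ∀ t ∈ Icc (0 : ℝ) 1, HasDerivAt γ (g t) t)
    (hg : ∀ t ∈ Icc (0 : ℝ) 1, ‖g t - v‖ ≤ C) :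
    ∀ t ∈ Icc (0 : ℝ) 1, ‖γ t - γ 0 - t • v‖ ≤ C * t := by
  intro t ht
  have hderiv : ∀ s ∈ Icc (0 : ℝ) 1,
      HasDerivWithinAt (fun s => γ s - s • v) (g s - v) (Icc 0 1) s := fun s hs => by
    have hsmul : HasDerivAt (fun s : ℝ => s • v) v s := by
      simpa only [one_smul] using (hasDerivAt_id' s).smul_const v
    exact ((hγ s hs).sub hsmul).hasDerivWithinAt
  have h := (convex_Icc (0 : ℝ) 1).norm_image_sub_le_of_norm_hasDerivWithin_le hderiv hg
    (left_mem_Icc.2 zero_le_one) ht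
  rwa [zero_smul, sub_zero, sub_zero, Real.norm_of_nonneg ht.1, sub_right_comm] at h

theorem norm_comp_sub_comp_le_of_hasDerivAt {Z : E → E} {γ : ℝ → E} {L S : ℝ}
    (hγ : ∀ t ∈ Icc (0 : ℝ) 1, HasDerivAt γ (Z (γ t)) t)
    (hZ : ∀ t ∈ Icc (0 : ℝ) 1, DifferentiableAt ℝ Z (γ t))
    (hDZ : ∀ t ∈ Icc (0 : ℝ) 1, ‖fderiv ℝ Z (γ t)‖ ≤ L)
    (hS : ∀ t ∈ Icc (0 : ℝ) 1, ‖Z (γ t)‖ ≤ S) :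
    ∀ t ∈ Icc (0 : ℝ) 1, ‖Z (γ t) - Z (γ 0)‖ ≤ L * S := by
  have hacc : ∀ t ∈ Icc (0 : ℝ) 1,
      HasDerivAt (fun s => Z (γ s)) (fderiv ℝ Z (γ t) (Z (γ t))) t := fun t ht =>
    (hZ t ht).hasFDerivAt.comp_hasDerivAt t (hγ t ht)
  have hacc_le : ∀ t ∈ Icc (0 : ℝ) 1, ‖fderiv ℝ Z (γ t) (Z (γ t)) - 0‖ ≤ L * S := by
    intro t ht
    rw [sub_zero]
    exact (fderiv ℝ Z (γ t)).le_of_opNorm_le_of_le (hDZ t ht) (hS t ht)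
  intro t ht
  have hLS : 0 ≤ L * S :=
    (norm_nonneg _).trans (hacc_le 0 (left_mem_Icc.2 zero_le_one))
  calc ‖Z (γ t) - Z (γ 0)‖ = ‖Z (γ t) - Z (γ 0) - t • (0 : E)‖ := by rw [smul_zero, sub_zero]
    _ ≤ L * S * t := norm_sub_sub_smul_le_of_norm_deriv_sub_le hacc hacc_le t ht
    _ ≤ L * S := mul_le_of_le_one_right hLS ht.2

theorem eq_zero_of_hasDerivAt_of_periodic {Z : E → E} {γ : ℝ → E} {L : ℝ} (hL : L < 1 / 2)
    (hγ : ∀ t ∈ Icc (0 : ℝ) 1, HasDerivAt γ (Z (γ t)) t)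
    (hZ : ∀ t ∈ Icc (0 : ℝ) 1, DifferentiableAt ℝ Z (γ t))
    (hDZ : ∀ t ∈ Icc (0 : ℝ) 1, ‖fderiv ℝ Z (γ t)‖ ≤ L)
    (hper : γ 1 = γ 0) : Z (γ 0) = 0 := by
  have hcont : ContinuousOn (fun t => ‖Z (γ t)‖) (Icc 0 1) := fun t ht =>
    ((hZ t ht).continuousAt.comp (hγ t ht).continuousAt).norm.continuousWithinAt
  obtain ⟨t₀, ht₀, hmax⟩ := isCompact_Icc.exists_isMaxOn (nonempty_Icc.2 zero_le_one) hcont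
  set S := ‖Z (γ t₀)‖
  have hvar := norm_comp_sub_comp_le_of_hasDerivAt hγ hZ hDZ fun t ht => hmax ht
  have hS : S ≤ ‖Z (γ 0)‖ + L * S :=
    (norm_le_norm_add_norm_sub' _ _).trans (add_le_add le_rfl (hvar t₀ ht₀))
  have hZ₀ : ‖Z (γ 0)‖ ≤ L * S := by
    have h := norm_sub_sub_smul_le_of_norm_deriv_sub_le hγ hvar 1 (right_mem_Icc.2 zero_le_one)
    rwa [hper, sub_self, one_smul, zero_sub, norm_neg, mul_one] at h
  have hS₀ : S ≤ 0 := by nlinarith [norm_nonneg (Z (γ 0))]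
  exact norm_le_zero_iff.1 ((hmax (left_mem_Icc.2 zero_le_one)).trans hS₀)

/-- Non-self-intersection of flows of small vector fields.  There
is a `δ > 0` depending only on `n` such that: if `Z` is a `C¹` vector field on
an open set `V ⊆ ℝⁿ` with `‖Z‖_{C¹(V;ℝⁿ)} ≤ δ`, and `γ` is an integral curve of
`Z` on `[0,1]` staying in `V` with `γ(0) = γ(1) = x` (i.e. `e^{Z}x = x` with
`e^{tZ}x ∈ V` for all `t ∈ [0,1]`), then `Z(x) = 0`. -/
theorem no_periodic_orbit_of_small_C1
    (n : ℕ) :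
    ∃ δ : ℝ, 0 < δ ∧
      ∀ (V : Set (EuclideanSpace ℝ (Fin n))), IsOpen V →
      ∀ Z : EuclideanSpace ℝ (Fin n) → EuclideanSpace ℝ (Fin n),
        ContDiffOn ℝ 1 Z V →
        (∀ x ∈ V, ‖Z x‖ ≤ δ) →
        (∀ x ∈ V, ‖fderiv ℝ Z x‖ ≤ δ) →
        ∀ (γ : ℝ → EuclideanSpace ℝ (Fin n)) (x : EuclideanSpace ℝ (Fin n)),
          (∀ t ∈ Icc (0 : ℝ) 1, γ t ∈ V) →
          (∀ t ∈ Icc (0 : ℝ) 1, HasDerivAt γ (Z (γ t)) t) →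
          γ 0 = x → γ 1 = x → Z x = 0 := by
  refine ⟨1 / 4, by norm_num, fun V hV Z hZ _ hDZ γ x hγV hγ h0 h1 => ?_⟩
  subst h0
  have hZγ : ∀ t ∈ Icc (0 : ℝ) 1, DifferentiableAt ℝ Z (γ t) := fun t ht =>
    (hZ.contDiffAt (hV.mem_nhds (hγV t ht))).differentiableAt one_ne_zero
  exact eq_zero_of_hasDerivAt_of_periodic (by norm_num) hγ hZγ (fun t ht => hDZ _ (hγV t ht)) h1
end
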